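/- arXiv:2603.00278 — 7 statements merged into one kernel-verified Lean document; each statement's English description precedes it below -/
import Mathlib

section
/- Let m, n be positive integers. Define γ as the permutation of {0,1,...,mn−1} taking the row-major dealing of an m×n grid to the column-major dealing, i.e., γ(ni+j) = mj+i for 0 ≤ i < m, 0 ≤ j < n. Then the sign of γ equals (−1)^(C(m,2)·C(n,2)). -/
/-!
The sign of a permutation of `Fin N` is `(-1)` to the number of its inversions. Row-major order
on the cells `(i, j)` of the grid is lexicographic in `(i, j)` and column-major order is
lexicographic in `(j, i)`, so γ inverts a pair of cells exactly when one lies strictly above and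
strictly to the right of the other. Such pairs are given by a choice of two rows and two columns.
-/

open Equiv Finset

namespace Equiv.Perm

variable {N : ℕ}

def inversions (σ : Perm (Fin N)) : Finset (Fin N × Fin N) :=
  {p | p.1 < p.2 ∧ σ p.2 < σ p.1}

theorem sign_eq_neg_one_pow_card_inversions (σ : Perm (Fin N)) :
    sign σ = (-1) ^ #σ.inversions := by
  rw [sign_eq_prod_prod_Iio, ← prod_finset_product_right' {p : Fin N × Fin N | p.1 < p.2} univ
    (fun j => Iio j) (by simp), prod_ite, prod_const_one, one_mul, prod_const]
  congr 2
  ext p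
  simp only [inversions, mem_filter, mem_univ, true_and, not_lt]
  exact and_congr_right fun h => (σ.injective.ne h.ne').le_iff_lt

end Equiv.Perm

theorem Nat.mul_add_lt_mul_add_iff {n a b c d : ℕ} (ha : a < n) (hc : c < n) :
    n * b + a < n * d + c ↔ b < d ∨ b = d ∧ a < c := by
  constructor
  · intro h
    rcases lt_trichotomy b d with hbd | rfl | hdb
    · exact .inl hbd
    · exact .inr ⟨rfl, by omega⟩
    · nlinarith
  · rintro (hbd | ⟨rfl, hac⟩)
    · nlinarith
    · omega

theorem rowMajor_lt_and_colMajor_gt_iff {m n i i' j j' : ℕ} (hi : i < m) (hi' : i' < m)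
    (hj : j < n) (hj' : j' < n) :
    n * i + j < n * i' + j' ∧ m * j' + i' < m * j + i ↔ i < i' ∧ j' < j := by
  rw [Nat.mul_add_lt_mul_add_iff hj hj', Nat.mul_add_lt_mul_add_iff hi' hi]
  omega

theorem card_discordant_pairs (α β : Type*) [Fintype α] [LinearOrder α] [Fintype β]
    [LinearOrder β] :
    #{q : (α × β) × (α × β) | q.1.1 < q.2.1 ∧ q.2.2 < q.1.2} =
      (Fintype.card α).choose 2 * (Fintype.card β).choose 2 := by
  rw [← card_univ, ← card_product_filter_lt, ← card_univ, ← card_product_filter_lt,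
    ← card_product]
  refine card_equiv ((prodProdProdComm α β α β).trans (prodCongr (Equiv.refl _) (prodComm β β))) ?_
  simp

theorem stmt_0_general (m n : ℕ)
    (γ : Equiv.Perm (Fin (m * n)))
    (hγ : ∀ i j : ℕ, i < m → j < n → ∀ h : n * i + j < m * n,
      ((γ ⟨n * i + j, h⟩ : Fin (m * n)) : ℕ) = m * j + i) :
    Equiv.Perm.sign γ = (-1 : ℤˣ) ^ (m.choose 2 * n.choose 2) := by
  have hγ_grid (x : Fin m × Fin n) : (γ (finProdFinEquiv x) : ℕ) = m * x.2 + x.1 := by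
    have hx : (finProdFinEquiv x : ℕ) = n * x.1 + x.2 := by simp [add_comm]
    rw [← hγ _ _ x.1.isLt x.2.isLt (hx ▸ (finProdFinEquiv x).isLt)]
    exact congrArg _ (congrArg γ (Fin.ext hx))
  have hinversions : #γ.inversions =
      #{q : (Fin m × Fin n) × (Fin m × Fin n) | q.1.1 < q.2.1 ∧ q.2.2 < q.1.2} := by
    refine (card_equiv (finProdFinEquiv.prodCongr finProdFinEquiv) fun q => ?_).symm
    simp only [Perm.inversions, mem_filter, mem_univ, true_and, prodCongr_apply, Prod.map_fst,
      Prod.map_snd, Fin.lt_def, hγ_grid, finProdFinEquiv_apply_val]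
    rw [add_comm, add_comm (q.2.2 : ℕ),
      rowMajor_lt_and_colMajor_gt_iff q.1.1.isLt q.2.1.isLt q.1.2.isLt q.2.2.isLt]
  rw [Perm.sign_eq_neg_one_pow_card_inversions, hinversions, card_discordant_pairs,
    Fintype.card_fin, Fintype.card_fin]

/-- The permutation γ of {0,...,mn-1} taking the row-major deal of an m×n grid to the
column-major deal, i.e. γ(n*i+j) = m*j+i, has sign (-1)^(C(m,2)·C(n,2)). -/
theorem stmt_0 (m n : ℕ) (hm : 0 < m) (hn : 0 < n)
    (γ : Equiv.Perm (Fin (m * n)))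
    (hγ : ∀ i j : ℕ, i < m → j < n → ∀ h : n * i + j < m * n,
      ((γ ⟨n * i + j, h⟩ : Fin (m * n)) : ℕ) = m * j + i) :
    Equiv.Perm.sign γ = (-1 : ℤˣ) ^ (m.choose 2 * n.choose 2) :=
  stmt_0_general m n γ hγ
end

section
/- Let m, n be odd positive integers and γ the permutation of {0,...,mn−1} with γ(ni+j) = mj+i. Then sign(γ) = (−1)^((m−1)(n−1)/4). -/
/-!
The sign of a permutation of `Fin N` is `-1` to the number of its inversions. Reading
`Fin (m * n)` as `Fin m × Fin n` in lexicographic order, `γ` is the transpose `(i, j) ↦ (j, i)`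
followed by the lexicographic reading of `Fin n × Fin m`, so a pair `(i, j) < (i', j')` is
inverted exactly when `i < i'` and `j' < j`. There are `C(m, 2) * C(n, 2)` such pairs, and for odd
`m`, `n` this number is `m * n * ((m - 1) * (n - 1) / 4)` with `m * n` odd.
-/

open Equiv Finset

theorem Equiv.Perm.sign_eq_neg_one_pow_card_inversions_s2 {N : ℕ} (σ : Perm (Fin N)) :
    sign σ = (-1) ^ #{p : Fin N × Fin N | p.1 < p.2 ∧ σ p.2 < σ p.1} := by
  rw [σ.sign_eq_prod_prod_Ioi, ← prod_const, prod_filter, ← univ_product_univ, prod_product]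
  refine prod_congr rfl fun i _ => ?_
  rw [← filter_lt_eq_Ioi, prod_filter]
  refine prod_congr rfl fun j _ => ?_
  by_cases hij : i < j
  · rcases lt_or_gt_of_ne (σ.injective.ne hij.ne) with h | h <;> simp [hij, h, h.not_gt]
  · simp [hij]

theorem Fin.card_filter_fst_lt_snd (m : ℕ) : #{p : Fin m × Fin m | p.1 < p.2} = m.choose 2 := by
  rw [Nat.choose_two_right, ← sum_range_id, ← Fin.sum_univ_eq_sum_range, card_filter,
    ← univ_product_univ, sum_product_right]
  refine sum_congr rfl fun j _ => ?_
  rw [← card_filter, filter_gt_eq_Iio, Fin.card_Iio]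

theorem Prod.Lex.lt_and_swap_gt_iff {α β : Type*} [LinearOrder α] [LinearOrder β]
    (p q : α × β) :
    toLex p < toLex q ∧ toLex q.swap < toLex p.swap ↔ p.1 < q.1 ∧ q.2 < p.2 := by
  simp only [Prod.Lex.toLex_lt_toLex, Prod.fst_swap, Prod.snd_swap]
  constructor
  · rintro ⟨h | ⟨h, _⟩, h' | ⟨h', _⟩⟩ <;> grind
  · rintro ⟨h, h'⟩
    exact ⟨.inl h, .inl h'⟩

theorem finProdFinEquiv_lt_finProdFinEquiv {m n : ℕ} {p q : Fin m × Fin n} :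
    finProdFinEquiv p < finProdFinEquiv q ↔ toLex p < toLex q := by
  suffices StrictMono fun x : Fin m ×ₗ Fin n => finProdFinEquiv (ofLex x) from
    this.lt_iff_lt
  intro a b h
  simp only [Fin.lt_def, finProdFinEquiv_apply_val]
  rcases Prod.Lex.lt_iff.1 h with h | ⟨h, h'⟩
  · have hi := Nat.mul_le_mul_left n (Fin.lt_def.1 h)
    have hj := (ofLex a).2.isLt
    rw [Nat.mul_succ] at hi
    omega
  · rw [h]
    exact Nat.add_lt_add_right h' _

theorem card_inversions_eq_choose_two_mul_choose_two {m n : ℕ} (γ : Perm (Fin (m * n)))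
    (hγ : ∀ p : Fin m × Fin n, (γ (finProdFinEquiv p) : ℕ) = finProdFinEquiv p.swap) :
    #{x : Fin (m * n) × Fin (m * n) | x.1 < x.2 ∧ γ x.2 < γ x.1} =
      m.choose 2 * n.choose 2 := by
  have hγ_lt (p q : Fin m × Fin n) :
      γ (finProdFinEquiv p) < γ (finProdFinEquiv q) ↔ toLex p.swap < toLex q.swap := by
    rw [Fin.lt_def, hγ, hγ, ← Fin.lt_def, finProdFinEquiv_lt_finProdFinEquiv]
  calc #{x : Fin (m * n) × Fin (m * n) | x.1 < x.2 ∧ γ x.2 < γ x.1}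
      = Fintype.card
          {x : (Fin m × Fin n) × (Fin m × Fin n) // x.1.1 < x.2.1 ∧ x.2.2 < x.1.2} := by
        rw [← Fintype.card_subtype]
        refine Fintype.card_congr ((finProdFinEquiv.prodCongr finProdFinEquiv).subtypeEquiv
          fun x => ?_).symm
        simp [finProdFinEquiv_lt_finProdFinEquiv, hγ_lt, Prod.Lex.lt_and_swap_gt_iff]
    _ = Fintype.card ({a : Fin m × Fin m // a.1 < a.2} × {b : Fin n × Fin n // b.1 < b.2}) :=
        Fintype.card_congr
          { toFun x := (⟨(x.1.1.1, x.1.2.1), x.2.1⟩, ⟨(x.1.2.2, x.1.1.2), x.2.2⟩)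
            invFun y := ⟨((y.1.1.1, y.2.1.2), (y.1.1.2, y.2.1.1)), y.1.2, y.2.2⟩
            left_inv _ := rfl
            right_inv _ := rfl }
    _ = m.choose 2 * n.choose 2 := by
        rw [Fintype.card_prod, Fintype.card_subtype, Fintype.card_subtype,
          Fin.card_filter_fst_lt_snd, Fin.card_filter_fst_lt_snd]

theorem neg_one_pow_choose_two_mul_choose_two {M : Type*} [Monoid M] [HasDistribNeg M] {m n : ℕ}
    (hm : Odd m) (hn : Odd n) :
    (-1 : M) ^ (m.choose 2 * n.choose 2) = (-1) ^ ((m - 1) * (n - 1) / 4) := by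
  have choose_two (k : ℕ) : (2 * k + 1).choose 2 = (2 * k + 1) * k := by
    rw [Nat.choose_two_right, Nat.add_sub_cancel, mul_left_comm,
      Nat.mul_div_cancel_left _ two_pos]
  obtain ⟨a, rfl⟩ := hm
  obtain ⟨b, rfl⟩ := hn
  have hquarter : (2 * a + 1 - 1) * (2 * b + 1 - 1) / 4 = a * b := by
    rw [Nat.add_sub_cancel, Nat.add_sub_cancel, show 2 * a * (2 * b) = 4 * (a * b) by ring,
      Nat.mul_div_cancel_left _ four_pos]
  have hodd : Odd ((2 * a + 1) * (2 * b + 1)) :=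
    (odd_two_mul_add_one a).mul (odd_two_mul_add_one b)
  rw [choose_two, choose_two, hquarter,
    show (2 * a + 1) * a * ((2 * b + 1) * b) = (2 * a + 1) * (2 * b + 1) * (a * b) by ring,
    pow_mul, hodd.neg_one_pow]

theorem stmt_2_general (m n : ℕ) (hm : Odd m) (hn : Odd n)
    (γ : Equiv.Perm (Fin (m * n)))
    (hγ : ∀ i j : ℕ, i < m → j < n → ∀ h : n * i + j < m * n,
      ((γ ⟨n * i + j, h⟩ : Fin (m * n)) : ℕ) = m * j + i) :
    Equiv.Perm.sign γ = (-1 : ℤˣ) ^ ((m - 1) * (n - 1) / 4) := by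
  have hγ_transpose (p : Fin m × Fin n) :
      (γ (finProdFinEquiv p) : ℕ) = finProdFinEquiv p.swap := by
    obtain ⟨i, j⟩ := p
    have hlt := Nat.mul_add_lt_mul_of_lt_of_lt i.isLt j.isLt
    rw [show finProdFinEquiv (i, j) = ⟨n * i + j, hlt⟩ from Fin.ext (add_comm _ _),
      hγ i j i.isLt j.isLt hlt, finProdFinEquiv_apply_val, add_comm]
    rfl
  rw [γ.sign_eq_neg_one_pow_card_inversions_s2,
    card_inversions_eq_choose_two_mul_choose_two γ hγ_transpose,
    neg_one_pow_choose_two_mul_choose_two hm hn]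

/-- For odd positive m, n, the permutation γ with γ(n*i+j) = m*j+i has sign
(-1)^((m-1)(n-1)/4). -/
theorem stmt_2 (m n : ℕ) (hm : Odd m) (hn : Odd n) (hm0 : 0 < m) (hn0 : 0 < n)
    (γ : Equiv.Perm (Fin (m * n)))
    (hγ : ∀ i j : ℕ, i < m → j < n → ∀ h : n * i + j < m * n,
      ((γ ⟨n * i + j, h⟩ : Fin (m * n)) : ℕ) = m * j + i) :
    Equiv.Perm.sign γ = (-1 : ℤˣ) ^ ((m - 1) * (n - 1) / 4) :=
  stmt_2_general m n hm hn γ hγ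
end

section
/- Let m, n be coprime odd positive integers. Define α as the permutation of {0,...,mn−1} taking the row deal to the diagonal deal: for 0 ≤ i < m, 0 ≤ j < n, α(ni+j) is the unique element t of {0,...,mn−1} with t ≡ i (mod m) and t ≡ j (mod n). Then sign(α) equals the sign of the permutation of Z/mZ given by multiplication by n. -/
/-!
Write `t < mn` as `t = j + n y` with `j = t mod n` and `y ∈ ℤ/mℤ`. Then `α` preserves `j`,
and on the fibre over `j` it acts as `x ↦ n⁻¹ (x - j)` on `ℤ/mℤ`. Since `m` is odd, every
translation of `ℤ/mℤ` is the square of a translation, hence even, so each of the `n` fibres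
contributes the sign of multiplication by `n`; as `n` is odd, so does their product.
-/

open Equiv Equiv.Perm

theorem sign_addRight_of_odd_card {G : Type*} [AddGroup G] [Fintype G] [DecidableEq G]
    (hG : Odd (Nat.card G)) (a : G) : sign (Equiv.addRight a) = 1 := by
  obtain ⟨b, rfl⟩ := (Nat.Coprime.nsmul_right_bijective (n := 2) hG.coprime_two_right).2 a
  dsimp only
  rw [two_nsmul, addRight_add, map_mul, Int.units_mul_self]

theorem sign_subRight_trans {G : Type*} [AddGroup G] [Fintype G] [DecidableEq G]
    (hG : Odd (Nat.card G)) (c : G) (e : Perm G) :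
    sign ((Equiv.subRight c).trans e) = sign e := by
  rw [Equiv.subRight_eq_addRight_neg, ← Perm.mul_def, map_mul, sign_addRight_of_odd_card hG,
    mul_one]

theorem Int.units_pow_of_odd (u : ℤˣ) {n : ℕ} (hn : Odd n) : u ^ n = u := by
  rw [Int.units_pow_eq_pow_mod_two, Nat.odd_iff.1 hn, pow_one]

section Reindexing

variable (m n : ℕ) [NeZero m]

def zmodProdFinEquiv : ZMod m × Fin n ≃ Fin (m * n) :=
  ((ZMod.finEquiv m).toEquiv.symm.prodCongr (Equiv.refl _)).trans finProdFinEquiv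

variable {m n}

theorem zmodProdFinEquiv_apply_val (x : ZMod m) (j : Fin n) :
    (zmodProdFinEquiv m n (x, j) : ℕ) = j + n * x.val := by
  obtain _ | m := m
  · exact absurd rfl (NeZero.ne 0)
  · rfl

end Reindexing

theorem eq_permCongr_prodCongrLeft_of_mod {m n : ℕ} [NeZero m] (hco : Nat.Coprime m n)
    (α : Perm (Fin (m * n)))
    (hα : ∀ i j : ℕ, i < m → j < n → ∀ h : n * i + j < m * n,
      ((α ⟨n * i + j, h⟩ : Fin (m * n)) : ℕ) % m = i ∧
      ((α ⟨n * i + j, h⟩ : Fin (m * n)) : ℕ) % n = j) :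
    α = (zmodProdFinEquiv m n).permCongr (prodCongrLeft fun j : Fin n =>
      (Equiv.subRight (j : ZMod m)).trans
        (MulAction.toPerm (ZMod.unitOfCoprime n hco.symm)).symm) := by
  set u := ZMod.unitOfCoprime n hco.symm
  refine Equiv.ext fun t => ?_
  obtain ⟨⟨x, j⟩, rfl⟩ := (zmodProdFinEquiv m n).surjective t
  set y : ZMod m := ((u⁻¹ : (ZMod m)ˣ) : ZMod m) * (x - j)
  rw [permCongr_apply, symm_apply_apply, prodCongrLeft_apply]
  change α _ = zmodProdFinEquiv m n (y, j)
  have hlt : n * x.val + j < m * n := by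
    have := (zmodProdFinEquiv m n (x, j)).isLt
    rw [zmodProdFinEquiv_apply_val] at this
    omega
  have hx : zmodProdFinEquiv m n (x, j) = ⟨n * x.val + j, hlt⟩ :=
    Fin.ext (by rw [zmodProdFinEquiv_apply_val, add_comm])
  obtain ⟨hmod_m, hmod_n⟩ := hα x.val j x.val_lt j.isLt hlt
  rw [hx]
  apply Fin.ext
  rw [zmodProdFinEquiv_apply_val]
  set t := ((α ⟨n * x.val + j, hlt⟩ : Fin (m * n)) : ℕ)
  have hy_lt : j + n * y.val < m * n := by
    rw [← zmodProdFinEquiv_apply_val]; exact Fin.isLt _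
  refine Nat.ModEq.eq_of_lt_of_lt ((Nat.modEq_and_modEq_iff_modEq_mul hco).1 ⟨?_, ?_⟩)
    (Fin.isLt _) hy_lt
  · rw [← ZMod.natCast_eq_natCast_iff, ← ZMod.natCast_mod t, hmod_m]
    push_cast
    rw [ZMod.natCast_zmod_val, ZMod.natCast_val, ZMod.cast_id', id,
      ← ZMod.coe_unitOfCoprime n hco.symm, Units.mul_inv_cancel_left, add_sub_cancel]
  · change t % n = (j + n * y.val) % n
    rw [hmod_n, Nat.add_mul_mod_self_left, Nat.mod_eq_of_lt j.isLt]

theorem stmt_4_general (m n : ℕ) (hm : Odd m) (hn : Odd n) (hm0 : 0 < m)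
    (hco : Nat.Coprime m n)
    (α : Equiv.Perm (Fin (m * n)))
    (hα : ∀ i j : ℕ, i < m → j < n → ∀ h : n * i + j < m * n,
      ((α ⟨n * i + j, h⟩ : Fin (m * n)) : ℕ) % m = i ∧
      ((α ⟨n * i + j, h⟩ : Fin (m * n)) : ℕ) % n = j) :
    haveI : NeZero m := ⟨hm0.ne'⟩
    ∀ σ : Equiv.Perm (ZMod m), (∀ x, σ x = (n : ZMod m) * x) →
      Equiv.Perm.sign α = Equiv.Perm.sign σ := by
  have : NeZero m := ⟨hm0.ne'⟩
  intro σ hσ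
  have hσ_eq : σ = MulAction.toPerm (ZMod.unitOfCoprime n hco.symm) :=
    Equiv.ext fun x => by
      rw [hσ, MulAction.toPerm_apply, Units.smul_def, ZMod.coe_unitOfCoprime, smul_eq_mul]
  have hm_card : Odd (Nat.card (ZMod m)) := by rwa [Nat.card_zmod]
  rw [eq_permCongr_prodCongrLeft_of_mod hco α hα, sign_permCongr, sign_prodCongrLeft]
  simp only [sign_subRight_trans hm_card, sign_symm, Finset.prod_const, Finset.card_univ,
    Fintype.card_fin, Int.units_pow_of_odd _ hn, hσ_eq]

/-- For coprime odd positive m, n, the permutation α of {0,...,mn-1} taking the row deal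
to the diagonal deal (α(n*i+j) ≡ i mod m and ≡ j mod n) has sign equal to the sign of the
permutation of ℤ/mℤ given by multiplication by n. -/
theorem stmt_4 (m n : ℕ) (hm : Odd m) (hn : Odd n) (hm0 : 0 < m) (hn0 : 0 < n)
    (hco : Nat.Coprime m n)
    (α : Equiv.Perm (Fin (m * n)))
    (hα : ∀ i j : ℕ, i < m → j < n → ∀ h : n * i + j < m * n,
      ((α ⟨n * i + j, h⟩ : Fin (m * n)) : ℕ) % m = i ∧
      ((α ⟨n * i + j, h⟩ : Fin (m * n)) : ℕ) % n = j) :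
    haveI : NeZero m := ⟨hm0.ne'⟩
    ∀ σ : Equiv.Perm (ZMod m), (∀ x, σ x = (n : ZMod m) * x) →
      Equiv.Perm.sign α = Equiv.Perm.sign σ :=
  stmt_4_general m n hm hn hm0 hco α hα
end

section
/- Let p be an odd prime. The map a ↦ [a/p], sending a unit a of Z/pZ to the sign of the permutation of Z/pZ given by multiplication by a, is a surjective group homomorphism from (Z/pZ)× to {±1}. -/
/-! Multiplicativity holds because `a ↦ (x ↦ a * x)` and `sign` are both homomorphisms.
For surjectivity, multiplication by a generator `g` of the cyclic group `Kˣ` fixes `0` and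
permutes `Kˣ` as a single cycle of length `q - 1`, which is even for odd `q`; so its sign is `-1`. -/

open Equiv Finset

section GroupWithZero

variable {G₀ : Type*} [GroupWithZero G₀]

lemma toPerm_units_apply_ne_iff {g : G₀ˣ} (hg : g ≠ 1) {x : G₀} :
    MulAction.toPerm g x ≠ x ↔ x ≠ 0 := by
  refine ⟨fun h hx => h (by simp [hx]), fun hx h => hg (Units.ext ?_)⟩
  exact mul_right_cancel₀ hx (h.trans (one_mul x).symm)

lemma isCycle_toPerm_of_forall_mem_zpowers {g : G₀ˣ} (hg : ∀ u, u ∈ Subgroup.zpowers g)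
    (hg1 : g ≠ 1) : (MulAction.toPerm g : Perm G₀).IsCycle := by
  refine ⟨1, (toPerm_units_apply_ne_iff hg1).2 one_ne_zero, fun y hy => ?_⟩
  obtain ⟨u, rfl⟩ := isUnit_iff_ne_zero.2 ((toPerm_units_apply_ne_iff hg1).1 hy)
  obtain ⟨n, rfl⟩ := Subgroup.mem_zpowers_iff.1 (hg u)
  refine ⟨n, ?_⟩
  change (MulAction.toPermHom G₀ˣ G₀ g ^ n) 1 = _
  rw [← map_zpow]
  simp [MulAction.toPermHom, Units.smul_def]

lemma support_toPerm_units [Fintype G₀] [DecidableEq G₀] {g : G₀ˣ} (hg : g ≠ 1) :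
    (MulAction.toPerm g : Perm G₀).support = univ.erase 0 := by
  ext x
  simpa using toPerm_units_apply_ne_iff hg

end GroupWithZero

lemma sign_toPerm_of_forall_mem_zpowers {K : Type*} [Field K] [Fintype K] [DecidableEq K]
    (hK : Odd (Fintype.card K)) {g : Kˣ} (hg : ∀ u, u ∈ Subgroup.zpowers g) :
    Perm.sign (MulAction.toPerm g : Perm K) = -1 := by
  have hcard : Fintype.card Kˣ = Fintype.card K - 1 := Fintype.card_units K
  have hg1 : g ≠ 1 := by
    rintro rfl
    have : Fintype.card Kˣ = 1 :=
      Fintype.card_eq_one_iff.2 ⟨1, fun u => by simpa [eq_comm] using hg u⟩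
    have := Fintype.one_lt_card (α := K)
    obtain ⟨k, hk⟩ := hK
    omega
  rw [(isCycle_toPerm_of_forall_mem_zpowers hg hg1).sign, support_toPerm_units hg1,
    card_erase_of_mem (mem_univ _), card_univ, (hK.tsub_odd odd_one).neg_one_pow]

lemma sign_toPerm_units_surjective {K : Type*} [Field K] [Fintype K] [DecidableEq K]
    (hK : Odd (Fintype.card K)) :
    Function.Surjective fun a : Kˣ => Perm.sign (MulAction.toPerm a : Perm K) := by
  obtain ⟨g, hg⟩ := IsCyclic.exists_generator (α := Kˣ)
  intro s
  rcases Int.units_eq_one_or s with rfl | rfl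
  · exact ⟨1, by simp [MulAction.toPerm_one]⟩
  · exact ⟨g, sign_toPerm_of_forall_mem_zpowers hK hg⟩

/-- For an odd prime p, the map sending a unit a of ℤ/pℤ to the sign of the permutation
x ↦ a·x of ℤ/pℤ is a surjective group homomorphism onto {±1} = ℤˣ. -/
theorem stmt_7 (p : ℕ) (hp : p.Prime) (hodd : Odd p) :
    haveI : Fact p.Prime := ⟨hp⟩
    (∀ a b : (ZMod p)ˣ,
        Equiv.Perm.sign (MulAction.toPerm (a * b) : Equiv.Perm (ZMod p)) =
          Equiv.Perm.sign (MulAction.toPerm a : Equiv.Perm (ZMod p)) *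
            Equiv.Perm.sign (MulAction.toPerm b : Equiv.Perm (ZMod p))) ∧
      Function.Surjective
        (fun a : (ZMod p)ˣ =>
          Equiv.Perm.sign (MulAction.toPerm a : Equiv.Perm (ZMod p))) := by
  have : Fact p.Prime := ⟨hp⟩
  exact ⟨map_mul (Perm.sign.comp (MulAction.toPermHom (ZMod p)ˣ (ZMod p))),
    sign_toPerm_units_surjective (by rwa [ZMod.card])⟩
end

section
/- Zolotarev's Lemma: Let p be an odd prime and a an integer not divisible by p. The sign of the permutation of Z/pZ given by multiplication by a equals the Legendre symbol (a/p). -/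
/-!
Both `u ↦ sign (x ↦ u * x)` and the quadratic character are homomorphisms `Kˣ → ℤˣ`, and `Kˣ` is
cyclic, so it suffices to compare them on a generator `g`. Multiplication by `g` fixes `0` and
permutes `Kˣ` as one cycle of even length `#K - 1`, so it is odd; and `g` is not a square, since
otherwise every element of `Kˣ` would be one.
-/

open Equiv.Perm Subgroup

section

variable {K : Type*} [Field K]

theorem Units.smul_eq_self_iff_eq_zero {u : Kˣ} (hu : u ≠ 1) {x : K} : u • x = x ↔ x = 0 := by
  have hu' : (u : K) - 1 ≠ 0 := sub_ne_zero.mpr (Units.val_eq_one.not.mpr hu)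
  rw [Units.smul_def, _root_.smul_eq_mul, ← sub_eq_zero, ← sub_one_mul, mul_eq_zero,
    or_iff_right hu']

theorem Units.isCycle_toPerm_of_generator {g : Kˣ} (hg : ∀ u, u ∈ zpowers g) (hg1 : g ≠ 1) :
    (MulAction.toPerm g : Equiv.Perm K).IsCycle := by
  refine ⟨1, by simp [Units.smul_eq_self_iff_eq_zero hg1], fun y hy => ?_⟩
  rw [Ne, MulAction.toPerm_apply, Units.smul_eq_self_iff_eq_zero hg1] at hy
  obtain ⟨n, hn⟩ := mem_zpowers_iff.mp (hg (Units.mk0 y hy))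
  refine ⟨n, ?_⟩
  rw [← MulAction.toPermHom_apply, ← map_zpow, MulAction.toPermHom_apply, MulAction.toPerm_apply,
    hn, Units.smul_mk0, _root_.smul_eq_mul, mul_one]

theorem Units.generator_ne_one (hK : ringChar K ≠ 2) {g : Kˣ} (hg : ∀ u, u ∈ zpowers g) :
    g ≠ 1 := by
  rintro rfl
  have : (-1 : Kˣ) = 1 := by simpa using hg (-1)
  exact Ring.neg_one_ne_one_of_char_ne_two hK congr((↑$this : K))

variable [Fintype K] [DecidableEq K]

theorem Units.support_toPerm {u : Kˣ} (hu : u ≠ 1) :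
    (MulAction.toPerm u : Equiv.Perm K).support = {0}ᶜ := by
  ext x
  simp [Units.smul_eq_self_iff_eq_zero hu]

theorem Units.sign_toPerm_eq_neg_one_of_generator (hK : ringChar K ≠ 2) {g : Kˣ}
    (hg : ∀ u, u ∈ zpowers g) : sign (MulAction.toPerm g : Equiv.Perm K) = -1 := by
  have hg1 := Units.generator_ne_one hK hg
  have hodd : Odd (Fintype.card K) := Nat.odd_iff.mpr (FiniteField.odd_card_of_char_ne_two hK)
  rw [(Units.isCycle_toPerm_of_generator hg hg1).sign, Units.support_toPerm hg1,
    Finset.card_compl, Finset.card_singleton, (Nat.Odd.sub_odd hodd odd_one).neg_one_pow]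

theorem quadraticChar_eq_neg_one_of_generator (hK : ringChar K ≠ 2) {g : Kˣ} (hg : ∀ u, u ∈ zpowers g) :
    quadraticChar K g = -1 := by
  obtain ⟨a, ha⟩ := quadraticChar_exists_neg_one' hK
  by_contra h
  rw [quadraticChar_neg_one_iff_not_isSquare, not_not] at h
  obtain ⟨n, rfl⟩ := mem_zpowers_iff.mp (hg a)
  rw [Units.val_zpow_eq_zpow_val, quadraticChar_neg_one_iff_not_isSquare] at ha
  exact ha (h.zpow n)

theorem Units.sign_toPerm_eq_quadraticChar (hK : ringChar K ≠ 2) (u : Kˣ) :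
    (sign (MulAction.toPerm u : Equiv.Perm K) : ℤ) = quadraticChar K u := by
  obtain ⟨g, hg⟩ := IsCyclic.exists_generator (α := Kˣ)
  have hχg : (quadraticChar K).toUnitHom g = -1 :=
    Units.ext (by rw [MulChar.coe_toUnitHom, quadraticChar_eq_neg_one_of_generator hK hg]; rfl)
  obtain ⟨n, rfl⟩ := mem_zpowers_iff.mp (hg u)
  rw [← MulChar.coe_toUnitHom, ← MulAction.toPermHom_apply, map_zpow, map_zpow, map_zpow,
    MulAction.toPermHom_apply, Units.sign_toPerm_eq_neg_one_of_generator hK hg, hχg]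

end

/-- Zolotarev's Lemma: for an odd prime p and an integer a not divisible by p, the sign of
the permutation of ℤ/pℤ given by multiplication by a equals the Legendre symbol (a/p). -/
theorem stmt_8 (p : ℕ) (hp : p.Prime) (hodd : Odd p) (a : ℤ) (ha : ¬ (p : ℤ) ∣ a) :
    haveI : Fact p.Prime := ⟨hp⟩
    ∀ σ : Equiv.Perm (ZMod p), (∀ x, σ x = (a : ZMod p) * x) →
      (Equiv.Perm.sign σ : ℤ) = legendreSym p a := by
  have : Fact p.Prime := ⟨hp⟩
  intro σ hσ
  have ha0 : (a : ZMod p) ≠ 0 := by rwa [Ne, ZMod.intCast_zmod_eq_zero_iff_dvd]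
  have hσu : σ = MulAction.toPerm (Units.mk0 _ ha0) := Equiv.ext hσ
  have hp2 : ringChar (ZMod p) ≠ 2 := by
    rw [ZMod.ringChar_zmod_n]; rintro rfl; exact Nat.not_odd_iff_even.mpr even_two hodd
  rw [hσu, Units.sign_toPerm_eq_quadraticChar hp2, Units.val_mk0]
  rfl
end

section
/- Let n ≥ 3 be odd and m = (n−1)/2. The permutation α of {1,...,n−1} taking the row deal of a 2×m grid to the zigzag deal equals multiplication by 2 modulo n on {1,...,n−1}; hence sign(α) = [2/n], the Zolotarev symbol. -/
/-! Reading the row deal, card `x + 1` with `x = m * i + j` lands in position `2 * j + 1`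
(top row, `i = 0`) or `2 * j` (bottom row, `i = 1`) of the zigzag; in both cases the new label
is `2 * (x + 1)` modulo `n = 2 * m + 1`, since `2 * (m + j + 1) = (2 * j + 1) + n`. Identifying
`{1, …, n - 1}` with the nonzero residues mod `n`, `α` becomes multiplication by `2` on `ZMod n`
restricted to the complement of the fixed point `0`, so the two signs agree. -/

open Equiv

namespace ZMod

lemma val_natCast_succ_fin {n : ℕ} (x : Fin (n - 1)) : (((x : ℕ) + 1 : ℕ) : ZMod n).val = x + 1 :=
  val_cast_of_lt (by omega)

def finPredEquivNeZero (n : ℕ) [NeZero n] : Fin (n - 1) ≃ {z : ZMod n // z ≠ 0} where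
  toFun x := ⟨((x : ℕ) + 1 : ℕ), fun h => by simpa [h] using (val_natCast_succ_fin x).symm⟩
  invFun z := ⟨z.1.val - 1, by
    have := z.1.val_lt
    have : z.1.val ≠ 0 := (val_eq_zero _).not.mpr z.2
    omega⟩
  left_inv x := by
    ext
    simp only [val_natCast_succ_fin, Nat.add_sub_cancel]
  right_inv z := by
    have : z.1.val ≠ 0 := (val_eq_zero _).not.mpr z.2
    ext
    simp only
    rw [Nat.sub_add_cancel (by omega), natCast_zmod_val]

variable {n : ℕ} [NeZero n]

@[simp]
lemma coe_finPredEquivNeZero_apply (x : Fin (n - 1)) :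
    (finPredEquivNeZero n x : ZMod n) = (((x : ℕ) + 1 : ℕ) : ZMod n) :=
  rfl

lemma sign_eq_sign_of_map_zero {α : Perm (Fin (n - 1))} {σ : Perm (ZMod n)} (h₀ : σ 0 = 0)
    (hσ : ∀ x : Fin (n - 1), σ (((x : ℕ) + 1 : ℕ)) = (((α x : ℕ) + 1 : ℕ) : ZMod n)) :
    Perm.sign α = Perm.sign σ := by
  have hext : σ = α.extendDomain (finPredEquivNeZero n) := by
    ext z
    by_cases hz : z = 0
    · subst hz
      rw [h₀, Perm.extendDomain_apply_not_subtype _ _ (by simp)]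
    · obtain ⟨x, rfl⟩ : ∃ x, (finPredEquivNeZero n x : ZMod n) = z :=
        ⟨(finPredEquivNeZero n).symm ⟨z, hz⟩, by simp only [Equiv.apply_symm_apply]⟩
      rw [Perm.extendDomain_apply_image, coe_finPredEquivNeZero_apply, hσ]
      rfl
  rw [hext, Perm.sign_extendDomain]

end ZMod

lemma rowDeal_zigzag_succ_mod {n m : ℕ} (hn : n = 2 * m + 1) (α : Fin (n - 1) → Fin (n - 1))
    (hα : ∀ i j : ℕ, i < 2 → j < m → ∀ h : m * i + j < n - 1,
      ((α ⟨m * i + j, h⟩ : Fin (n - 1)) : ℕ) = if i = 1 then 2 * j else 2 * j + 1)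
    (x : Fin (n - 1)) : ((α x : ℕ) + 1) % n = (2 * ((x : ℕ) + 1)) % n := by
  have hm : 0 < m := by have := x.2; omega
  have hx : (x : ℕ) < m * 2 := by omega
  have hrow : x / m < 2 := Nat.div_lt_of_lt_mul hx
  have hdivmod : m * (x / m) + x % m = x := Nat.div_add_mod _ _
  have hα' := hα _ _ hrow (Nat.mod_lt _ hm) (hdivmod ▸ x.2)
  simp only [hdivmod] at hα'
  rw [hα']
  interval_cases h : (x : ℕ) / m
  · simp only [zero_ne_one, if_false]
    congr 1
    omega
  · simp only [if_true]
    rw [show 2 * ((x : ℕ) + 1) = 2 * (x % m) + 1 + n by omega, Nat.add_mod_right]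

/-- For odd n ≥ 3 and m = (n-1)/2, the permutation α of {1,...,n-1} (encoded as Fin (n-1)
via c ↦ c-1) taking the row deal of a 2×m grid to the zigzag deal equals multiplication
by 2 modulo n; hence sign α = [2/n], the sign of multiplication by 2 on ℤ/nℤ. -/
theorem stmt_12 (n m : ℕ) (hn : Odd n) (hn3 : 3 ≤ n) (hm : m = (n - 1) / 2)
    (α : Equiv.Perm (Fin (n - 1)))
    (hα : ∀ i j : ℕ, i < 2 → j < m → ∀ h : m * i + j < n - 1,
      ((α ⟨m * i + j, h⟩ : Fin (n - 1)) : ℕ) = if i = 1 then 2 * j else 2 * j + 1) :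
    haveI : NeZero n := ⟨by omega⟩
    (∀ x : Fin (n - 1),
        (((α x : Fin (n - 1)) : ℕ) + 1) % n = (2 * ((x : ℕ) + 1)) % n) ∧
      ∀ σ : Equiv.Perm (ZMod n), (∀ x, σ x = 2 * x) →
        Equiv.Perm.sign α = Equiv.Perm.sign σ := by
  have : NeZero n := ⟨by omega⟩
  have hnm : n = 2 * m + 1 := by obtain ⟨k, rfl⟩ := hn; omega
  have hmul := rowDeal_zigzag_succ_mod hnm α hα
  refine ⟨hmul, fun σ hσ => ZMod.sign_eq_sign_of_map_zero (by rw [hσ, mul_zero]) fun x => ?_⟩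
  rw [hσ, (ZMod.natCast_eq_natCast_iff' _ _ n).mpr (hmul x)]
  push_cast
  rfl
end

section
/- Let n ≥ 3 be odd. The sign of the permutation of Z/nZ given by multiplication by 2 equals (−1)^((n²−1)/8). -/
/-!
Listing `2x mod n` for `x = 0, …, n - 1` with `n = 2m + 1` gives `0, 2, …, 2m, 1, 3, …, 2m - 1`.
The inversions are exactly the pairs (even `2i`, odd `2j - 1`) with `j ≤ i`, so there are
`1 + 2 + ⋯ + m = m(m + 1)/2 = (n² - 1)/8` of them, and the sign is `(-1)` to that power.
-/

open Finset

theorem Nat.two_mul_mod_two_mul_add_one {m a : ℕ} (ha : a < 2 * m + 1) :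
    2 * a % (2 * m + 1) = if a ≤ m then 2 * a else 2 * a - (2 * m + 1) := by
  split_ifs
  · exact Nat.mod_eq_of_lt (by omega)
  · rw [Nat.mod_eq_sub_mod (by omega), Nat.mod_eq_of_lt (by omega)]

theorem Fin.card_filter_lt_and_two_mul_lt {m : ℕ} (i : Fin (2 * m + 1)) :
    #{j | i < j ∧ 2 * j < 2 * i} = if (i : ℕ) ≤ m then (i : ℕ) else 0 := by
  have hval (x : Fin (2 * m + 1)) : ((2 * x : Fin (2 * m + 1)) : ℕ) = 2 * x % (2 * m + 1) := by
    simp [Fin.val_mul]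
  have hi := Nat.two_mul_mod_two_mul_add_one i.isLt
  split_ifs
  · have hrow : ({j | i < j ∧ 2 * j < 2 * i} : Finset _) =
        Ioc ⟨m, by omega⟩ ⟨i + m, by omega⟩ := by
      ext j
      have hj := Nat.two_mul_mod_two_mul_add_one j.isLt
      simp only [mem_filter, mem_univ, true_and, mem_Ioc, Fin.lt_def, Fin.le_def, hval]
      split_ifs at hi hj <;> omega
    rw [hrow, Fin.card_Ioc]
    exact Nat.add_sub_cancel ..
  · refine card_eq_zero.2 (filter_eq_empty_iff.2 fun j _ ↦ ?_)
    have hj := Nat.two_mul_mod_two_mul_add_one j.isLt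
    simp only [Fin.lt_def, hval]
    split_ifs at hi hj <;> omega

namespace Equiv.Perm

def finInversions {n : ℕ} (f : Perm (Fin n)) : Finset (Fin n × Fin n) :=
  {p | p.1 < p.2 ∧ f p.2 < f p.1}

theorem sign_eq_signAux {n : ℕ} (f : Perm (Fin n)) : sign f = signAux f := by
  induction f using swap_induction_on with
  | one => rw [map_one, signAux_one]
  | swap_mul f x y hxy ih => rw [sign_mul, signAux_mul, ih, sign_swap hxy, signAux_swap hxy]

theorem sign_eq_neg_one_pow_card_finInversions {n : ℕ} (f : Perm (Fin n)) :
    sign f = (-1) ^ #f.finInversions := by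
  have hcard : #{p ∈ finPairsLT n | f p.1 ≤ f p.2} = #f.finInversions := by
    refine card_nbij' (fun p ↦ (p.2, p.1)) (fun p ↦ ⟨p.2, p.1⟩) ?_ ?_ ?_ ?_
    · rintro ⟨a, b⟩ h
      simp only [mem_coe, mem_filter, mem_finPairsLT] at h
      simp only [finInversions, mem_coe, mem_filter, mem_univ, true_and]
      exact ⟨h.1, h.2.lt_of_ne (f.injective.ne h.1.ne')⟩
    · rintro ⟨a, b⟩ h
      simp only [finInversions, mem_coe, mem_filter, mem_univ, true_and] at h
      simp only [mem_coe, mem_filter, mem_finPairsLT]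
      exact ⟨h.1, h.2.le⟩
    · rintro ⟨a, b⟩ _; rfl
    · rintro ⟨a, b⟩ _; rfl
  rw [sign_eq_signAux, signAux, prod_ite, prod_const, prod_const, one_pow, mul_one, hcard]

theorem card_finInversions_eq_sum {n : ℕ} (f : Perm (Fin n)) :
    #f.finInversions = ∑ i, #{j | i < j ∧ f j < f i} := by
  simp only [finInversions, card_filter, Fintype.sum_prod_type]

theorem card_finInversions_of_eq_two_mul {m : ℕ} (f : Perm (Fin (2 * m + 1)))
    (hf : ∀ x, f x = 2 * x) : #f.finInversions * 2 = (m + 1) * m := by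
  have hsum : ∑ i ∈ range (2 * m + 1), (if i ≤ m then i else 0) = ∑ i ∈ range (m + 1), i := by
    rw [← sum_filter]
    congr 1
    ext i
    simp only [mem_filter, mem_range]
    omega
  simp only [card_finInversions_eq_sum, hf, Fin.card_filter_lt_and_two_mul_lt]
  rw [Fin.sum_univ_eq_sum_range (fun i ↦ if i ≤ m then i else 0), hsum, sum_range_id_mul_two,
    Nat.add_sub_cancel]

end Equiv.Perm

/-- For odd n ≥ 3, the sign of multiplication by 2 on ℤ/nℤ equals (-1)^((n²-1)/8). -/
theorem stmt_13 (n : ℕ) (hn : Odd n) (hn3 : 3 ≤ n) :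
    haveI : NeZero n := ⟨by omega⟩
    ∀ σ : Equiv.Perm (ZMod n), (∀ x, σ x = 2 * x) →
      Equiv.Perm.sign σ = (-1 : ℤˣ) ^ ((n ^ 2 - 1) / 8) := by
  obtain ⟨m, rfl⟩ := hn
  intro σ hσ
  -- `ZMod (2 * m + 1)` is `Fin (2 * m + 1)` by definition, so `σ` is a permutation of `Fin _`
  refine (Equiv.Perm.sign_eq_neg_one_pow_card_finInversions σ).trans (congrArg _ ?_)
  have hcard := Equiv.Perm.card_finInversions_of_eq_two_mul σ hσ
  have hsq : (2 * m + 1) ^ 2 - 1 = 4 * ((m + 1) * m) := Nat.sub_eq_of_eq_add (by ring)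
  omega
end
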